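/- arXiv:1510.06816 — 5 statements merged into one kernel-verified Lean document; each statement's English description precedes it below -/
import Mathlib

section
/- The matrix over Z₃ with rows (0,0,0,0,0,0), (0,0,1,2,2,1), (0,1,0,1,2,2), (0,2,1,0,1,2), (0,2,2,1,0,1), (0,1,2,2,1,0) is a GH(6, Z₃): for any two distinct rows r, s, the multiset of differences over Z₃ contains each element of Z₃ exactly twice. -/
theorem stmt_6 :
    let M : Fin 6 → Fin 6 → ZMod 3 :=
      ![![0, 0, 0, 0, 0, 0],
        ![0, 0, 1, 2, 2, 1],
        ![0, 1, 0, 1, 2, 2],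
        ![0, 2, 1, 0, 1, 2],
        ![0, 2, 2, 1, 0, 1],
        ![0, 1, 2, 2, 1, 0]]
    ∀ r s : Fin 6, r ≠ s → ∀ g : ZMod 3,
      (Finset.univ.filter (fun t : Fin 6 => M r t - M s t = g)).card = 2 := by
  intro M r s hrs g
  fin_cases r <;> fin_cases s <;> simp_all <;> fin_cases g <;> decide
end

section
/- The 7×7 matrix over the sixth roots of unity given by M = [[-1,1,1,1,1,1,1],[1,-ω,ω,ω,ω²,1,1],[1,ω,-ω,ω,1,ω²,1],[1,ω,ω,-ω,1,1,ω²],[1,ω²,1,1,-ω,ω,ω],[1,1,ω²,1,ω,-ω,ω],[1,1,1,ω²,ω,ω,-ω]], where ω is a primitive cube root of unity, satisfies M·M* = 7·I₇, where M* is the conjugate transpose. -/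
/-! On the unit circle `conj ω = ω⁻¹ = ω²`, so every entry of `M Mᴴ` is a polynomial in `ω`;
reduced modulo `1 + ω + ω²` it is `7` on the diagonal and `0` off it. -/

open Matrix

theorem pow_three_eq_one_of_one_add_add_sq_eq_zero {R : Type*} [CommRing R] {ω : R}
    (hsum : 1 + ω + ω ^ 2 = 0) : ω ^ 3 = 1 := by
  linear_combination (ω - 1) * hsum

theorem Complex.conj_eq_sq_of_pow_three_eq_one {ω : ℂ} (h3 : ω ^ 3 = 1) :
    starRingEnd ℂ ω = ω ^ 2 := by
  have hω : ω ≠ 0 := by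
    rintro rfl
    norm_num at h3
  have hnorm : ‖ω‖ = 1 := Complex.norm_eq_one_of_pow_eq_one h3 (by norm_num)
  apply mul_left_cancel₀ hω
  rw [Complex.mul_conj', hnorm]
  push_cast
  linear_combination -h3

set_option maxHeartbeats 1000000 in
theorem mul_conjTranspose_eq_seven_smul_one {R : Type*} [CommRing R] [StarRing R] (ω : R)
    (hstar : star ω = ω ^ 2) (hsum : 1 + ω + ω ^ 2 = 0) :
    let M : Matrix (Fin 7) (Fin 7) R :=
      !![-1, 1, 1, 1, 1, 1, 1;
         1, -ω, ω, ω, ω ^ 2, 1, 1;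
         1, ω, -ω, ω, 1, ω ^ 2, 1;
         1, ω, ω, -ω, 1, 1, ω ^ 2;
         1, ω ^ 2, 1, 1, -ω, ω, ω;
         1, 1, ω ^ 2, 1, ω, -ω, ω;
         1, 1, 1, ω ^ 2, ω, ω, -ω]
    M * Mᴴ = (7 : R) • (1 : Matrix (Fin 7) (Fin 7) R) := by
  intro M
  ext i j
  fin_cases i <;> fin_cases j <;>
    simp [M, mul_apply, conjTranspose_apply, Fin.sum_univ_seven, one_apply, hstar] <;>
    grind

theorem stmt_8_general (ω : ℂ) (hsum : 1 + ω + ω ^ 2 = 0) :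
    let M : Matrix (Fin 7) (Fin 7) ℂ :=
      !![-1, 1, 1, 1, 1, 1, 1;
         1, -ω, ω, ω, ω ^ 2, 1, 1;
         1, ω, -ω, ω, 1, ω ^ 2, 1;
         1, ω, ω, -ω, 1, 1, ω ^ 2;
         1, ω ^ 2, 1, 1, -ω, ω, ω;
         1, 1, ω ^ 2, 1, ω, -ω, ω;
         1, 1, 1, ω ^ 2, ω, ω, -ω]
    M * M.conjTranspose = (7 : ℂ) • (1 : Matrix (Fin 7) (Fin 7) ℂ) :=
  mul_conjTranspose_eq_seven_smul_one ω
    (Complex.conj_eq_sq_of_pow_three_eq_one (pow_three_eq_one_of_one_add_add_sq_eq_zero hsum)) hsum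

theorem stmt_8 (ω : ℂ) (h3 : ω ^ 3 = 1) (hsum : 1 + ω + ω ^ 2 = 0) :
    let M : Matrix (Fin 7) (Fin 7) ℂ :=
      !![-1, 1, 1, 1, 1, 1, 1;
         1, -ω, ω, ω, ω ^ 2, 1, 1;
         1, ω, -ω, ω, 1, ω ^ 2, 1;
         1, ω, ω, -ω, 1, 1, ω ^ 2;
         1, ω ^ 2, 1, 1, -ω, ω, ω;
         1, 1, ω ^ 2, 1, ω, -ω, ω;
         1, 1, 1, ω ^ 2, ω, ω, -ω]
    M * M.conjTranspose = (7 : ℂ) • (1 : Matrix (Fin 7) (Fin 7) ℂ) :=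
  stmt_8_general ω hsum
end

section
/- Let ω be a primitive cube root of unity. Then the 21×21 block matrix M constructed from Brock's nine 7×7 circulant blocks over {1, ω, ω²}, arranged in a 3×3 array whose blocks have first rows ω^d for the digit strings 1121121, 0012210, 1012210 (first block row); 0012210, 0100001, 2012210 (second block row); 1012210, 2012210, 2220022 (third block row), satisfies M·M* = 21·I₂₁. -/
section BrockAux
variable {α : Type*} (a b c d e f g : α)
lemma brock_cv5 : ![a,b,c,d,e,f,g] 5 = f := rfl
lemma brock_cv6 : ![a,b,c,d,e,f,g] 6 = g := rfl
lemma brock_cvm1 : ![a,b,c,d,e,f,g] (-1) = g := rfl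
lemma brock_cvm2 : ![a,b,c,d,e,f,g] (-2) = f := rfl
lemma brock_cvm3 : ![a,b,c,d,e,f,g] (-3) = e := rfl
lemma brock_cvm4 : ![a,b,c,d,e,f,g] (-4) = d := rfl
lemma brock_cvm5 : ![a,b,c,d,e,f,g] (-5) = c := rfl
lemma brock_cvm6 : ![a,b,c,d,e,f,g] (-6) = b := rfl
lemma brock_mk2 (h) : (⟨2, h⟩ : Fin 7) = 2 := rfl
lemma brock_mk3 (h) : (⟨3, h⟩ : Fin 7) = 3 := rfl
lemma brock_mk4 (h) : (⟨4, h⟩ : Fin 7) = 4 := rfl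
lemma brock_mk5 (h) : (⟨5, h⟩ : Fin 7) = 5 := rfl
lemma brock_mk6 (h) : (⟨6, h⟩ : Fin 7) = 6 := rfl
lemma brock_mk2' (h) : (⟨2, h⟩ : Fin 3) = 2 := rfl
lemma brock_val1 : ((1 : Fin 7) : ℕ) = 1 := rfl
lemma brock_val2 : ((2 : Fin 7) : ℕ) = 2 := rfl
lemma brock_val3 : ((3 : Fin 7) : ℕ) = 3 := rfl
lemma brock_val4 : ((4 : Fin 7) : ℕ) = 4 := rfl
lemma brock_val5 : ((5 : Fin 7) : ℕ) = 5 := rfl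
lemma brock_val6 : ((6 : Fin 7) : ℕ) = 6 := rfl
lemma brock_val1' : ((1 : Fin 3) : ℕ) = 1 := rfl
lemma brock_val2' : ((2 : Fin 3) : ℕ) = 2 := rfl
end BrockAux

set_option maxHeartbeats 4000000 in
lemma brock_key (ω : ℂ) (h3 : ω ^ 3 = 1) (hsum : 1 + ω + ω ^ 2 = 0)
    (p1 q1 : Fin 3) (d : Fin 7) :
    ∑ r1 : Fin 3, ∑ r2 : Fin 7,
      ω ^ ((![![![1,1,2,1,1,2,1], ![0,0,1,2,2,1,0], ![1,0,1,2,2,1,0]],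
        ![![0,0,1,2,2,1,0], ![0,1,0,0,0,0,1], ![2,0,1,2,2,1,0]],
        ![![1,0,1,2,2,1,0], ![2,0,1,2,2,1,0], ![2,2,2,0,0,2,2]]]) p1 r1 r2) *
      (ω ^ 2) ^ ((![![![1,1,2,1,1,2,1], ![0,0,1,2,2,1,0], ![1,0,1,2,2,1,0]],
        ![![0,0,1,2,2,1,0], ![0,1,0,0,0,0,1], ![2,0,1,2,2,1,0]],
        ![![1,0,1,2,2,1,0], ![2,0,1,2,2,1,0], ![2,2,2,0,0,2,2]]]) q1 r1 (r2 - d)) =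
    if p1 = q1 ∧ d = 0 then 21 else 0 := by
  fin_cases p1 <;> fin_cases q1 <;> fin_cases d <;>
    norm_num [Fin.sum_univ_seven, Fin.sum_univ_three,
      Matrix.vecHead, Matrix.vecTail, Matrix.cons_val_zero, Matrix.cons_val_one,
      Matrix.head_cons, Matrix.cons_val_fin_one,
      Matrix.cons_val_two, Matrix.cons_val_three, Matrix.cons_val_four,
      brock_mk2, brock_mk3, brock_mk4, brock_mk5, brock_mk6, brock_mk2', Fin.ext_iff, Fin.sub_def,
      brock_val1, brock_val2, brock_val3, brock_val4, brock_val5, brock_val6, brock_val1', brock_val2',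
      brock_cv5, brock_cv6, brock_cvm1, brock_cvm2, brock_cvm3, brock_cvm4, brock_cvm5, brock_cvm6]
  · linear_combination ((-16 : ℂ) + (16 : ℂ) * ω + (-6 : ℂ) * ω^3 + (6 : ℂ) * ω^4) * hsum
  · linear_combination ((2 : ℂ) + (1 : ℂ) * ω + (2 : ℂ) * ω^3 + (2 : ℂ) * ω^4) * hsum
  · linear_combination ((2 : ℂ) + (-1 : ℂ) * ω + (2 : ℂ) * ω^2 + (4 : ℂ) * ω^3) * hsum
  · linear_combination ((2 : ℂ) * ω + (3 : ℂ) * ω^2 + (1 : ℂ) * ω^3 + (1 : ℂ) * ω^4) * hsum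
  · linear_combination ((2 : ℂ) * ω + (3 : ℂ) * ω^2 + (1 : ℂ) * ω^3 + (1 : ℂ) * ω^4) * hsum
  · linear_combination ((2 : ℂ) + (-1 : ℂ) * ω + (2 : ℂ) * ω^2 + (4 : ℂ) * ω^3) * hsum
  · linear_combination ((2 : ℂ) + (1 : ℂ) * ω + (2 : ℂ) * ω^3 + (2 : ℂ) * ω^4) * hsum
  · linear_combination ((3 : ℂ) + (2 : ℂ) * ω + (-1 : ℂ) * ω^2 + (1 : ℂ) * ω^3 + (2 : ℂ) * ω^4) * hsum
  · linear_combination ((2 : ℂ) + (3 : ℂ) * ω + (2 : ℂ) * ω^4) * hsum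
  · linear_combination ((3 : ℂ) + (1 : ℂ) * ω + (2 : ℂ) * ω^3 + (1 : ℂ) * ω^4) * hsum
  · linear_combination ((3 : ℂ) + (1 : ℂ) * ω + (2 : ℂ) * ω^3 + (1 : ℂ) * ω^4) * hsum
  · linear_combination ((3 : ℂ) + (1 : ℂ) * ω + (2 : ℂ) * ω^3 + (1 : ℂ) * ω^4) * hsum
  · linear_combination ((3 : ℂ) + (1 : ℂ) * ω + (2 : ℂ) * ω^3 + (1 : ℂ) * ω^4) * hsum
  · linear_combination ((2 : ℂ) + (3 : ℂ) * ω + (2 : ℂ) * ω^4) * hsum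
  · linear_combination ((2 : ℂ) + (3 : ℂ) * ω^3 + (2 : ℂ) * ω^4) * hsum
  · linear_combination ((1 : ℂ) + (2 : ℂ) * ω + (1 : ℂ) * ω^3 + (3 : ℂ) * ω^4) * hsum
  · linear_combination ((2 : ℂ) + (1 : ℂ) * ω + (-1 : ℂ) * ω^2 + (2 : ℂ) * ω^3 + (3 : ℂ) * ω^4) * hsum
  · linear_combination ((1 : ℂ) + (2 : ℂ) * ω + (1 : ℂ) * ω^3 + (3 : ℂ) * ω^4) * hsum
  · linear_combination ((1 : ℂ) + (2 : ℂ) * ω + (1 : ℂ) * ω^3 + (3 : ℂ) * ω^4) * hsum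
  · linear_combination ((2 : ℂ) + (1 : ℂ) * ω + (-1 : ℂ) * ω^2 + (2 : ℂ) * ω^3 + (3 : ℂ) * ω^4) * hsum
  · linear_combination ((1 : ℂ) + (2 : ℂ) * ω + (1 : ℂ) * ω^3 + (3 : ℂ) * ω^4) * hsum
  · linear_combination ((3 : ℂ) + (-1 : ℂ) * ω + (3 : ℂ) * ω^2 + (2 : ℂ) * ω^4) * hsum
  · linear_combination ((2 : ℂ) + (4 : ℂ) * ω^2 + (-1 : ℂ) * ω^3 + (2 : ℂ) * ω^4) * hsum
  · linear_combination ((3 : ℂ) + (-2 : ℂ) * ω + (4 : ℂ) * ω^2 + (1 : ℂ) * ω^3 + (1 : ℂ) * ω^4) * hsum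
  · linear_combination ((3 : ℂ) + (-2 : ℂ) * ω + (4 : ℂ) * ω^2 + (1 : ℂ) * ω^3 + (1 : ℂ) * ω^4) * hsum
  · linear_combination ((3 : ℂ) + (-2 : ℂ) * ω + (4 : ℂ) * ω^2 + (1 : ℂ) * ω^3 + (1 : ℂ) * ω^4) * hsum
  · linear_combination ((3 : ℂ) + (-2 : ℂ) * ω + (4 : ℂ) * ω^2 + (1 : ℂ) * ω^3 + (1 : ℂ) * ω^4) * hsum
  · linear_combination ((2 : ℂ) + (4 : ℂ) * ω^2 + (-1 : ℂ) * ω^3 + (2 : ℂ) * ω^4) * hsum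
  · linear_combination ((-11 : ℂ) + (11 : ℂ) * ω + (-5 : ℂ) * ω^3 + (5 : ℂ) * ω^4) * hsum
  · linear_combination ((5 : ℂ) + (-1 : ℂ) * ω + (1 : ℂ) * ω^2 + (2 : ℂ) * ω^4) * hsum
  · linear_combination ((6 : ℂ) + (-4 : ℂ) * ω + (2 : ℂ) * ω^2 + (3 : ℂ) * ω^3) * hsum
  · linear_combination ((3 : ℂ) + (1 : ℂ) * ω + (3 : ℂ) * ω^2 + (-2 : ℂ) * ω^3 + (2 : ℂ) * ω^4) * hsum
  · linear_combination ((3 : ℂ) + (1 : ℂ) * ω + (3 : ℂ) * ω^2 + (-2 : ℂ) * ω^3 + (2 : ℂ) * ω^4) * hsum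
  · linear_combination ((6 : ℂ) + (-4 : ℂ) * ω + (2 : ℂ) * ω^2 + (3 : ℂ) * ω^3) * hsum
  · linear_combination ((5 : ℂ) + (-1 : ℂ) * ω + (1 : ℂ) * ω^2 + (2 : ℂ) * ω^4) * hsum
  · linear_combination ((2 : ℂ) + (3 : ℂ) * ω^2 + (-1 : ℂ) * ω^3 + (3 : ℂ) * ω^4) * hsum
  · linear_combination ((3 : ℂ) + (-1 : ℂ) * ω + (2 : ℂ) * ω^2 + (3 : ℂ) * ω^4) * hsum
  · linear_combination ((3 : ℂ) + (-1 : ℂ) * ω + (2 : ℂ) * ω^2 + (3 : ℂ) * ω^4) * hsum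
  · linear_combination ((3 : ℂ) + (-2 : ℂ) * ω + (3 : ℂ) * ω^2 + (1 : ℂ) * ω^3 + (2 : ℂ) * ω^4) * hsum
  · linear_combination ((3 : ℂ) + (-2 : ℂ) * ω + (3 : ℂ) * ω^2 + (1 : ℂ) * ω^3 + (2 : ℂ) * ω^4) * hsum
  · linear_combination ((3 : ℂ) + (-1 : ℂ) * ω + (2 : ℂ) * ω^2 + (3 : ℂ) * ω^4) * hsum
  · linear_combination ((3 : ℂ) + (-1 : ℂ) * ω + (2 : ℂ) * ω^2 + (3 : ℂ) * ω^4) * hsum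
  · linear_combination ((2 : ℂ) + (-2 : ℂ) * ω + (5 : ℂ) * ω^2 + (2 : ℂ) * ω^4) * hsum
  · linear_combination ((1 : ℂ) + (5 : ℂ) * ω^2 + (-2 : ℂ) * ω^3 + (3 : ℂ) * ω^4) * hsum
  · linear_combination ((2 : ℂ) + (-1 : ℂ) * ω + (4 : ℂ) * ω^2 + (-1 : ℂ) * ω^3 + (3 : ℂ) * ω^4) * hsum
  · linear_combination ((1 : ℂ) + (5 : ℂ) * ω^2 + (-2 : ℂ) * ω^3 + (3 : ℂ) * ω^4) * hsum
  · linear_combination ((1 : ℂ) + (5 : ℂ) * ω^2 + (-2 : ℂ) * ω^3 + (3 : ℂ) * ω^4) * hsum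
  · linear_combination ((2 : ℂ) + (-1 : ℂ) * ω + (4 : ℂ) * ω^2 + (-1 : ℂ) * ω^3 + (3 : ℂ) * ω^4) * hsum
  · linear_combination ((1 : ℂ) + (5 : ℂ) * ω^2 + (-2 : ℂ) * ω^3 + (3 : ℂ) * ω^4) * hsum
  · linear_combination ((2 : ℂ) + (1 : ℂ) * ω + (4 : ℂ) * ω^2 + (-3 : ℂ) * ω^3 + (3 : ℂ) * ω^4) * hsum
  · linear_combination ((3 : ℂ) + (3 : ℂ) * ω^2 + (-2 : ℂ) * ω^3 + (3 : ℂ) * ω^4) * hsum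
  · linear_combination ((3 : ℂ) + (3 : ℂ) * ω^2 + (-2 : ℂ) * ω^3 + (3 : ℂ) * ω^4) * hsum
  · linear_combination ((3 : ℂ) + (-1 : ℂ) * ω + (4 : ℂ) * ω^2 + (-1 : ℂ) * ω^3 + (2 : ℂ) * ω^4) * hsum
  · linear_combination ((3 : ℂ) + (-1 : ℂ) * ω + (4 : ℂ) * ω^2 + (-1 : ℂ) * ω^3 + (2 : ℂ) * ω^4) * hsum
  · linear_combination ((3 : ℂ) + (3 : ℂ) * ω^2 + (-2 : ℂ) * ω^3 + (3 : ℂ) * ω^4) * hsum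
  · linear_combination ((3 : ℂ) + (3 : ℂ) * ω^2 + (-2 : ℂ) * ω^3 + (3 : ℂ) * ω^4) * hsum
  · linear_combination ((-15 : ℂ) + (15 : ℂ) * ω + (-10 : ℂ) * ω^3 + (10 : ℂ) * ω^4) * hsum
  · linear_combination ((1 : ℂ) + (2 : ℂ) * ω + (2 : ℂ) * ω^2 + (-4 : ℂ) * ω^3 + (6 : ℂ) * ω^4) * hsum
  · linear_combination ((2 : ℂ) + (-2 : ℂ) * ω + (4 : ℂ) * ω^2 + (3 : ℂ) * ω^4) * hsum
  · linear_combination ((2 : ℂ) * ω + (4 : ℂ) * ω^2 + (-4 : ℂ) * ω^3 + (5 : ℂ) * ω^4) * hsum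
  · linear_combination ((2 : ℂ) * ω + (4 : ℂ) * ω^2 + (-4 : ℂ) * ω^3 + (5 : ℂ) * ω^4) * hsum
  · linear_combination ((2 : ℂ) + (-2 : ℂ) * ω + (4 : ℂ) * ω^2 + (3 : ℂ) * ω^4) * hsum
  · linear_combination ((1 : ℂ) + (2 : ℂ) * ω + (2 : ℂ) * ω^2 + (-4 : ℂ) * ω^3 + (6 : ℂ) * ω^4) * hsum

set_option maxHeartbeats 1000000 in
theorem stmt_11 (ω : ℂ) (h3 : ω ^ 3 = 1) (hsum : 1 + ω + ω ^ 2 = 0) :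
    -- the 3×3 array of digit strings of length 7
    let s : Fin 3 → Fin 3 → Fin 7 → ℕ :=
      ![![![1,1,2,1,1,2,1], ![0,0,1,2,2,1,0], ![1,0,1,2,2,1,0]],
        ![![0,0,1,2,2,1,0], ![0,1,0,0,0,0,1], ![2,0,1,2,2,1,0]],
        ![![1,0,1,2,2,1,0], ![2,0,1,2,2,1,0], ![2,2,2,0,0,2,2]]]
    -- the 21×21 block matrix of circulants
    let M : Matrix (Fin 3 × Fin 7) (Fin 3 × Fin 7) ℂ :=
      fun p q => ω ^ (s p.1 q.1 (q.2 - p.2))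
    M * M.conjTranspose = (21 : ℂ) • (1 : Matrix (Fin 3 × Fin 7) (Fin 3 × Fin 7) ℂ) := by
  intro s M
  have hne : ω ≠ 0 := by rintro rfl; simp at h3
  have hn : Complex.normSq ω = 1 := by
    have h : (Complex.normSq ω) ^ 3 = 1 := by rw [← map_pow, h3]; simp
    nlinarith [Complex.normSq_nonneg ω, sq_nonneg (Complex.normSq ω - 1), sq_nonneg (Complex.normSq ω + 1)]
  have hstar : (starRingEnd ℂ) ω = ω ^ 2 := by
    have h2 : (starRingEnd ℂ) ω * ω = ω ^ 2 * ω := by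
      rw [mul_comm, Complex.mul_conj, hn]; push_cast; linear_combination -h3
    exact mul_right_cancel₀ hne h2
  have hstar2 : star ω = ω ^ 2 := hstar
  ext ⟨p1, p2⟩ ⟨q1, q2⟩
  have hiff : ((p1, p2) = (q1, q2)) ↔ (p1 = q1 ∧ q2 - p2 = 0) := by
    rw [Prod.ext_iff, sub_eq_zero]
    exact and_congr Iff.rfl ⟨fun h => h.symm, fun h => h.symm⟩
  simp only [Matrix.mul_apply, Matrix.conjTranspose_apply]
  simp only [Matrix.mul_apply, Matrix.conjTranspose_apply, Matrix.smul_apply, Matrix.one_apply,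
    M, s, Fintype.sum_prod_type, star_pow, hstar, smul_eq_mul, mul_ite, mul_one, mul_zero, hiff]
  rw [← brock_key ω h3 hsum p1 q1 (q2 - p2)]
  refine Finset.sum_congr rfl fun r1 _ => ?_
  refine Fintype.sum_equiv (Equiv.subRight p2) _ _ fun x => ?_
  have e1 : x - p2 - (q2 - p2) = x - q2 := by abel
  simp only [Equiv.subRight_apply, e1, hstar2]
end

section
/- The 13×13 circulant matrix M with first row (x, 1, -1, 1, 0, -1, -1, 1, 1, 1, 0, 1, 0) has the property that any two distinct rows are orthogonal with respect to the standard inner product when the contributions of the positions containing the symbol x are ignored; equivalently, replacing x by 0, any two distinct rows of the resulting circulant matrix whose supports avoid the diagonal positions of x have inner product equal to the negative of the product of the entries at the x-positions. Concretely: the 13×13 circulant matrix with first row (0,1,-1,1,0,-1,-1,1,1,1,0,1,0) satisfies that for distinct rows r, s, the inner product of row r and row s equals 0 whenever positions r and s are excluded from the sum. -/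
/-!
The first row `v` is a perfect ternary sequence: its periodic autocorrelation
`∑ t, v (t + d) * v t` vanishes at every nonzero shift `d` (so `M` is a circulant weighing
matrix of order 13 and weight 9). The inner product of rows `r` and `s` of `M` is this
autocorrelation at `s - r`, and since the diagonal of `M` is `v 0 = 0`, dropping the columns
`r` and `s` only removes zero terms.
-/

open Finset

theorem sum_sdiff_pair_mul_eq_sum {n R : Type*} [Fintype n] [DecidableEq n]
    [NonUnitalNonAssocSemiring R] (M : n → n → R) {r s : n} (hr : M r r = 0) (hs : M s s = 0) :
    ∑ t ∈ univ \ {r, s}, M r t * M s t = ∑ t, M r t * M s t := by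
  refine sum_subset (subset_univ _) fun t _ ht => ?_
  obtain rfl | rfl : t = r ∨ t = s := by simpa [or_iff_not_imp_left] using ht
  · rw [hr, zero_mul]
  · rw [hs, mul_zero]

def periodicAutocorrelation {G R : Type*} [Add G] [Fintype G] [Mul R] [AddCommMonoid R]
    (v : G → R) (d : G) : R :=
  ∑ t, v (t + d) * v t

theorem sum_sub_mul_sub_eq_periodicAutocorrelation {G R : Type*} [AddCommGroup G] [Fintype G]
    [Mul R] [AddCommMonoid R] (v : G → R) (r s : G) :
    ∑ t, v (t - r) * v (t - s) = periodicAutocorrelation v (s - r) := by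
  rw [periodicAutocorrelation, ← (Equiv.subRight s).sum_comp (fun t => v (t + (s - r)) * v t)]
  simp only [Equiv.subRight_apply, sub_add_sub_cancel]

theorem periodicAutocorrelation_ternary13_eq_zero {d : Fin 13} (hd : d ≠ 0) :
    periodicAutocorrelation (![0, 1, -1, 1, 0, -1, -1, 1, 1, 1, 0, 1, 0] : Fin 13 → ℝ) d = 0 := by
  fin_cases d <;> simp_all [periodicAutocorrelation, Fin.sum_univ_succ]

theorem stmt_14 :
    let v : Fin 13 → ℝ := ![0, 1, -1, 1, 0, -1, -1, 1, 1, 1, 0, 1, 0]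
    let M : Matrix (Fin 13) (Fin 13) ℝ := fun i j => v (j - i)
    ∀ r s : Fin 13, r ≠ s →
      ∑ t ∈ Finset.univ \ {r, s}, M r t * M s t = 0 := by
  intro v M r s hrs
  have hdiag : ∀ i, M i i = 0 := fun i => by simp [M, v]
  rw [sum_sdiff_pair_mul_eq_sum M (hdiag r) (hdiag s)]
  exact (sum_sub_mul_sub_eq_periodicAutocorrelation v r s).trans
    (periodicAutocorrelation_ternary13_eq_zero (sub_ne_zero.2 hrs.symm))
end

section
/- If C is a 17×17 matrix with entries in the cube roots of unity {1, ω, ω²} and zero diagonal such that C·C* = 16·I₁₇ (a generalized weighing matrix GW(17,16; Z₃)), then the 34×34 block matrix M = [[I + C, I - C],[I - C*, -I - C*]] satisfies M·M* = 34·I₃₄, where C* denotes the conjugate transpose of C. -/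
theorem stmt_15 (ω : ℂ) (h3 : ω ^ 3 = 1) (hsum : 1 + ω + ω ^ 2 = 0)
    (C : Matrix (Fin 17) (Fin 17) ℂ)
    (hdiag : ∀ i, C i i = 0)
    (hoff : ∀ i j, i ≠ j → C i j = 1 ∨ C i j = ω ∨ C i j = ω ^ 2)
    (hC : C * C.conjTranspose = (16 : ℂ) • (1 : Matrix (Fin 17) (Fin 17) ℂ)) :
    let M := Matrix.fromBlocks (1 + C) (1 - C) (1 - C.conjTranspose) (-1 - C.conjTranspose)
    M * M.conjTranspose
      = (34 : ℂ) • (1 : Matrix (Fin 17 ⊕ Fin 17) (Fin 17 ⊕ Fin 17) ℂ) := by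
  intro M
  have hC' : C.conjTranspose * C = (16 : ℂ) • (1 : Matrix (Fin 17) (Fin 17) ℂ) := by
    have h1 : C * ((16 : ℂ)⁻¹ • C.conjTranspose) = 1 := by
      rw [Matrix.mul_smul, hC, smul_smul]
      norm_num
    have h2 := mul_eq_one_comm.mp h1
    rw [Matrix.smul_mul] at h2
    have := congrArg (fun X => (16 : ℂ) • X) h2
    simpa [smul_smul] using this
  have e1 : (1 + C) * (1 + C.conjTranspose) + (1 - C) * (1 - C.conjTranspose)
      = (34 : ℂ) • (1 : Matrix (Fin 17) (Fin 17) ℂ) := by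
    have h : (1 + C) * (1 + C.conjTranspose) + (1 - C) * (1 - C.conjTranspose)
        = 2 • (1 : Matrix (Fin 17) (Fin 17) ℂ) + 2 • (C * C.conjTranspose) := by noncomm_ring
    rw [h, hC]
    module
  have e2 : (1 + C) * (1 - C) + (1 - C) * (-1 - C) = (0 : Matrix (Fin 17) (Fin 17) ℂ) := by
    noncomm_ring
  have e3 : (1 - C.conjTranspose) * (1 + C.conjTranspose)
      + (-1 - C.conjTranspose) * (1 - C.conjTranspose) = (0 : Matrix (Fin 17) (Fin 17) ℂ) := by
    noncomm_ring
  have e4 : (1 - C.conjTranspose) * (1 - C) + (-1 - C.conjTranspose) * (-1 - C)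
      = (34 : ℂ) • (1 : Matrix (Fin 17) (Fin 17) ℂ) := by
    have h : (1 - C.conjTranspose) * (1 - C) + (-1 - C.conjTranspose) * (-1 - C)
        = 2 • (1 : Matrix (Fin 17) (Fin 17) ℂ) + 2 • (C.conjTranspose * C) := by noncomm_ring
    rw [h, hC']
    module
  show Matrix.fromBlocks (1 + C) (1 - C) (1 - C.conjTranspose) (-1 - C.conjTranspose) *
      (Matrix.fromBlocks (1 + C) (1 - C) (1 - C.conjTranspose) (-1 - C.conjTranspose)).conjTranspose = _
  rw [Matrix.fromBlocks_conjTranspose, Matrix.fromBlocks_multiply]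
  simp only [Matrix.conjTranspose_add, Matrix.conjTranspose_sub, Matrix.conjTranspose_neg,
    Matrix.conjTranspose_one, Matrix.conjTranspose_conjTranspose]
  rw [e1, e2, e3, e4, ← Matrix.fromBlocks_one, Matrix.fromBlocks_smul, smul_zero]
end
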